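/- Let γ > 0, n ∈ ℕ, and fix w ∈ 𝔻. With l_i and f_w as defined (f_w = (γ+n+2)/(γ+n)·∏_{j=0}^{n-1}(γ+j+1)(γ+j+2)·l₁ − 2(γ+n+2)/(γ+n+1)·∏_{j=0}^{n-1}(γ+j)(γ+j+2)·l₂ + ∏_{j=0}^{n-1}(γ+j)(γ+j+1)·l₃), one has f_w^{(n)}(w) = [2·∏_{j=0}^{n-1}(γ+j)(γ+j+1)(γ+j+2)] / [(γ+n)(γ+n+1)] · conj(w)^n / (1-|w|²)^{γ+n-1}. -/

import Mathlib

open Complex Metric Finset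

/-- The kernel `l_i(z) = (1-|w|²)^i / (1 - conj w · z)^(γ+i-1)`. -/
noncomputable def lKernel (w : ℂ) (γ : ℝ) (i : ℕ) (z : ℂ) : ℂ :=
  ((1 - ‖w‖ ^ 2 : ℝ) : ℂ) ^ i / (1 - (starRingEnd ℂ) w * z) ^ ((γ : ℂ) + i - 1)

/-- The test function `f_w`. -/
noncomputable def fTest (w : ℂ) (γ : ℝ) (n : ℕ) (z : ℂ) : ℂ :=
  ((γ : ℂ) + n + 2) / ((γ : ℂ) + n) *
      (∏ j ∈ range n, (((γ : ℂ) + j + 1) * ((γ : ℂ) + j + 2))) * lKernel w γ 1 z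
  - 2 * ((γ : ℂ) + n + 2) / ((γ : ℂ) + n + 1) *
      (∏ j ∈ range n, (((γ : ℂ) + j) * ((γ : ℂ) + j + 2))) * lKernel w γ 2 z
  + (∏ j ∈ range n, (((γ : ℂ) + j) * ((γ : ℂ) + j + 1))) * lKernel w γ 3 z

/-! With `x = 1 - ‖w‖²`, the kernel is `l_i(z) = xⁱ (1 - w̄ z)^(-(γ+i-1))`, and since
`1 - w̄ w = x`, its `n`-th derivative at `w` is `(γ+i-1)ₙ w̄ⁿ x^(-(γ+n-1))`: the power of `x`
no longer depends on `i`. Writing `A, B, C` for the rising factorials `(γ)ₙ, (γ+1)ₙ, (γ+2)ₙ` and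
`m = γ + n`, the three terms of `f_w⁽ⁿ⁾(w)` are `ABC w̄ⁿ x^(-(γ+n-1))` times
`(m+2)/m`, `-2(m+2)/(m+1)` and `1`, which add up to `2/(m(m+1))`. -/

section OneSubMulCpow

variable (u : ℂ)

lemma isOpen_setOf_one_sub_mul_mem_slitPlane : IsOpen {z : ℂ | 1 - u * z ∈ slitPlane} :=
  isOpen_slitPlane.preimage (by fun_prop)

variable {u}

lemma analyticAt_one_sub_mul_cpow (s : ℂ) {z : ℂ} (hz : 1 - u * z ∈ slitPlane) :
    AnalyticAt ℂ (fun z => (1 - u * z) ^ s) z :=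
  (analyticAt_const.sub (analyticAt_const.mul analyticAt_id)).cpow analyticAt_const hz

lemma hasDerivAt_one_sub_mul_cpow_neg (s : ℂ) {z : ℂ} (hz : 1 - u * z ∈ slitPlane) :
    HasDerivAt (fun z => (1 - u * z) ^ (-s)) (s * u * (1 - u * z) ^ (-(s + 1))) z := by
  have hlin : HasDerivAt (fun z : ℂ => 1 - u * z) (-u) z := by
    simpa using ((hasDerivAt_id z).const_mul u).const_sub 1
  convert hlin.cpow_const (c := -s) hz using 1
  ring_nf

lemma iteratedDeriv_one_sub_mul_cpow_neg (n : ℕ) :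
    ∀ (s : ℂ) {z : ℂ}, 1 - u * z ∈ slitPlane →
      iteratedDeriv n (fun z => (1 - u * z) ^ (-s)) z
        = (∏ j ∈ range n, (s + j)) * u ^ n * (1 - u * z) ^ (-(s + n)) := by
  induction n with
  | zero => intro s z _; simp
  | succ n ih =>
    intro s z hz
    have hderiv : Set.EqOn (deriv fun z => (1 - u * z) ^ (-s))
        (fun z => s * u * (1 - u * z) ^ (-(s + 1))) {z | 1 - u * z ∈ slitPlane} :=
      fun y hy => (hasDerivAt_one_sub_mul_cpow_neg s hy).deriv
    rw [iteratedDeriv_succ',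
      hderiv.iteratedDeriv_of_isOpen (isOpen_setOf_one_sub_mul_mem_slitPlane u) n hz,
      iteratedDeriv_const_mul_field, ih (s + 1) hz, prod_range_succ']
    push_cast
    ring_nf

end OneSubMulCpow

lemma one_sub_conj_mul_self (w : ℂ) : 1 - starRingEnd ℂ w * w = ((1 - ‖w‖ ^ 2 : ℝ) : ℂ) := by
  rw [mul_comm, mul_conj, normSq_eq_norm_sq]
  push_cast
  ring

lemma one_sub_norm_sq_pos {w : ℂ} (hw : w ∈ ball (0 : ℂ) 1) : 0 < 1 - ‖w‖ ^ 2 := by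
  have : ‖w‖ < 1 := mem_ball_zero_iff.mp hw
  nlinarith [norm_nonneg w]

lemma one_sub_conj_mul_self_mem_slitPlane {w : ℂ} (hw : w ∈ ball (0 : ℂ) 1) :
    1 - starRingEnd ℂ w * w ∈ slitPlane := by
  rw [one_sub_conj_mul_self]
  exact ofReal_mem_slitPlane.mpr (one_sub_norm_sq_pos hw)

lemma lKernel_eq_mul_cpow_neg (w : ℂ) (γ : ℝ) (i : ℕ) :
    lKernel w γ i = fun z => ((1 - ‖w‖ ^ 2 : ℝ) : ℂ) ^ i *
      (1 - starRingEnd ℂ w * z) ^ (-((γ : ℂ) + i - 1)) := by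
  funext z
  rw [lKernel, cpow_neg, div_eq_mul_inv]

lemma contDiffAt_lKernel_self {w : ℂ} (hw : w ∈ ball (0 : ℂ) 1) (γ : ℝ) (i : ℕ)
    (n : WithTop ℕ∞) : ContDiffAt ℂ n (lKernel w γ i) w := by
  rw [lKernel_eq_mul_cpow_neg]
  exact contDiffAt_const.mul
    (analyticAt_one_sub_mul_cpow _ (one_sub_conj_mul_self_mem_slitPlane hw)).contDiffAt

lemma iteratedDeriv_lKernel_self {w : ℂ} (hw : w ∈ ball (0 : ℂ) 1) (γ : ℝ) (i n : ℕ) :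
    iteratedDeriv n (lKernel w γ i) w =
      (∏ j ∈ range n, ((γ : ℂ) + i - 1 + j)) * starRingEnd ℂ w ^ n /
        ((1 - ‖w‖ ^ 2 : ℝ) : ℂ) ^ ((γ : ℂ) + n - 1) := by
  rw [lKernel_eq_mul_cpow_neg, iteratedDeriv_const_mul_field,
    iteratedDeriv_one_sub_mul_cpow_neg n _ (one_sub_conj_mul_self_mem_slitPlane hw),
    one_sub_conj_mul_self]
  set x : ℂ := ((1 - ‖w‖ ^ 2 : ℝ) : ℂ)
  have hx0 : x ≠ 0 := ofReal_ne_zero.mpr (one_sub_norm_sq_pos hw).ne'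
  have hpow : x ^ i * x ^ (-((γ : ℂ) + i - 1 + n)) = (x ^ ((γ : ℂ) + n - 1))⁻¹ := by
    rw [← cpow_natCast, ← cpow_add _ _ hx0, ← cpow_neg]
    ring_nf
  rw [div_eq_mul_inv, ← hpow]
  ring

lemma add_two_div_sub_two_mul_add_two_div_add_one_add_one {K : Type*} [Field K] {m : K}
    (hm : m ≠ 0) (hm1 : m + 1 ≠ 0) :
    (m + 2) / m - 2 * (m + 2) / (m + 1) + 1 = 2 / (m * (m + 1)) := by
  field_simp
  ring

theorem fTest_nth_deriv (γ : ℝ) (hγ : 0 < γ) (n : ℕ) (w : ℂ)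
    (hw : w ∈ ball (0:ℂ) 1) :
    iteratedDeriv n (fTest w γ n) w =
      2 * (∏ j ∈ range n, (((γ : ℂ) + j) * ((γ : ℂ) + j + 1) * ((γ : ℂ) + j + 2))) /
        (((γ : ℂ) + n) * ((γ : ℂ) + n + 1)) *
        ((starRingEnd ℂ) w) ^ n /
        ((1 - ‖w‖ ^ 2 : ℝ) : ℂ) ^ ((γ : ℂ) + n - 1) := by
  have hK : ∀ (i : ℕ) (c : ℂ), ContDiffAt ℂ n (fun z => c * lKernel w γ i z) w :=
    fun i c => contDiffAt_const.mul (contDiffAt_lKernel_self hw γ i n)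
  have hm : (γ : ℂ) + n ≠ 0 := by exact_mod_cast (by positivity : (0 : ℝ) < γ + n).ne'
  have hm1 : (γ : ℂ) + n + 1 ≠ 0 := by
    exact_mod_cast (by positivity : (0 : ℝ) < γ + n + 1).ne'
  unfold fTest
  rw [iteratedDeriv_fun_add ((hK 1 _).sub (hK 2 _)) (hK 3 _),
    iteratedDeriv_fun_sub (hK 1 _) (hK 2 _)]
  simp only [iteratedDeriv_const_mul_field, iteratedDeriv_lKernel_self hw, prod_mul_distrib]
  have hB : ∏ j ∈ range n, ((γ : ℂ) + (2 : ℕ) - 1 + j) = ∏ j ∈ range n, ((γ : ℂ) + j + 1) :=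
    prod_congr rfl fun j _ => by push_cast; ring
  have hC : ∏ j ∈ range n, ((γ : ℂ) + (3 : ℕ) - 1 + j) = ∏ j ∈ range n, ((γ : ℂ) + j + 2) :=
    prod_congr rfl fun j _ => by push_cast; ring
  rw [hB, hC, Nat.cast_one, add_sub_cancel_right]
  linear_combination (∏ j ∈ range n, ((γ : ℂ) + j)) * (∏ j ∈ range n, ((γ : ℂ) + j + 1)) *
      (∏ j ∈ range n, ((γ : ℂ) + j + 2)) * starRingEnd ℂ w ^ n /
        ((1 - ‖w‖ ^ 2 : ℝ) : ℂ) ^ ((γ : ℂ) + n - 1) *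
    add_two_div_sub_two_mul_add_two_div_add_one_add_one hm hm1
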